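/- In the universe of bipartitions of a finite pixel set Π with a submodular order function, every F-tangle of S_k is a k-profile, where F is the set of all void stars with at most 3 elements together with all single pixels. -/

import Mathlib

section
variable {P : Type*}

/-- The separations of order `< k` in the universe of subsets of the pixel set. -/
def Sk (ord : Set P → ℝ) (k : ℝ) : Set (Set P) := {A | ord A < k}

/-- `O` is an orientation of `S_k`: it contains exactly one of `A`, `Aᶜ` for every
separation `A` of order `< k`. -/
def IsOrientationSk (ord : Set P → ℝ) (k : ℝ) (O : Set (Set P)) : Prop :=
  O ⊆ Sk ord k ∧ ∀ A : Set P, ord A < k → Xor' (A ∈ O) (Aᶜ ∈ O)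

/-- `O` is consistent (w.r.t. the ordering `A ≤ B :⇔ A ⊇ B` and involution `A ↦ Aᶜ`):
there are no distinct unoriented separations with orientations `B ⊂ A` such that
`Aᶜ ∈ O` and `B ∈ O`. -/
def ConsistentSk (O : Set (Set P)) : Prop :=
  ¬ ∃ A B : Set P, ({A, Aᶜ} : Set (Set P)) ≠ {B, Bᶜ} ∧ B ⊂ A ∧ Aᶜ ∈ O ∧ B ∈ O

/-- A `k`-profile: a consistent orientation of `S_k` satisfying the profile condition
(P): for all `A, B ∈ P`, `(A ∩ B)ᶜ ∉ P`. -/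
def IsKProfile (ord : Set P → ℝ) (k : ℝ) (O : Set (Set P)) : Prop :=
  IsOrientationSk ord k O ∧ ConsistentSk O ∧ ∀ A ∈ O, ∀ B ∈ O, (A ∩ B)ᶜ ∉ O

/-- A star of separations: its elements point towards each other
(`A ≤ Bᶜ`, i.e. `Bᶜ ⊆ A`, for distinct `A, B`). -/
def IsStarSet (σ : Set (Set P)) : Prop :=
  ∀ A ∈ σ, ∀ B ∈ σ, A ≠ B → Bᶜ ⊆ A

/-- `σ` belongs to `F`: it is a void star with at most 3 elements, or a single pixel. -/
def InF (σ : Set (Set P)) : Prop :=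
  (IsStarSet σ ∧ σ.ncard ≤ 3 ∧ ⋂₀ σ = ∅) ∨ ∃ p : P, σ = {{p}}

/-- An `F`-tangle of `S_k`: a consistent orientation of `S_k` with no subset in `F`. -/
def IsFTangle (ord : Set P → ℝ) (k : ℝ) (O : Set (Set P)) : Prop :=
  IsOrientationSk ord k O ∧ ConsistentSk O ∧ ∀ σ ⊆ O, ¬ InF σ

end

/-!
For `A, B ∈ O`, submodularity applied to `A` and `Bᶜ` shows that one of the corners
`A ∩ Bᶜ`, `B ∩ Aᶜ` has order `< k`, say `A ∩ Bᶜ`. Then `A ∩ Bᶜ ∉ O`, since it is disjoint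
from `B`, and consistency (with `∅ ∉ O`) forbids two disjoint separations in `O`. So
`Aᶜ ∪ B ∈ O`, and if also `(A ∩ B)ᶜ ∈ O`, then `{A, Aᶜ ∪ B, (A ∩ B)ᶜ}` is a void star of
size at most 3 inside `O`.
-/

open Set

section
variable {P : Type*}

theorem isStarSet_singleton (A : Set P) : IsStarSet {A} := by
  rintro X rfl Y rfl hXY
  exact absurd rfl hXY

theorem isStarSet_triple {X Y Z : Set P} (hXY : X ∪ Y = univ) (hXZ : X ∪ Z = univ)
    (hYZ : Y ∪ Z = univ) : IsStarSet {X, Y, Z} := by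
  have hcover : ∀ {U V : Set P}, U ∪ V = univ → Vᶜ ⊆ U ∧ Uᶜ ⊆ V := fun h =>
    ⟨compl_subset_iff_union.2 (by rwa [union_comm]), compl_subset_iff_union.2 h⟩
  rintro U (rfl | rfl | rfl) V (rfl | rfl | rfl) hUV
  all_goals first
    | exact absurd rfl hUV
    | exact (hcover ‹_›).1
    | exact (hcover ‹_›).2

theorem inF_triple {X Y Z : Set P} (hXY : X ∪ Y = univ) (hXZ : X ∪ Z = univ)
    (hYZ : Y ∪ Z = univ) (hvoid : X ∩ Y ∩ Z = ∅) : InF {X, Y, Z} := by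
  refine Or.inl ⟨isStarSet_triple hXY hXZ hYZ, ?_, ?_⟩
  · calc ({X, Y, Z} : Set (Set P)).ncard
        ≤ ({Y, Z} : Set (Set P)).ncard + 1 := ncard_insert_le _ _
      _ ≤ ({Z} : Set (Set P)).ncard + 1 + 1 := by gcongr; exact ncard_insert_le _ _
      _ = 3 := by rw [ncard_singleton]
  · rwa [sInter_insert, sInter_pair, ← inter_assoc]

variable {ord : Set P → ℝ} {k : ℝ} {O : Set (Set P)}

theorem IsOrientationSk.compl_not_mem (hO : IsOrientationSk ord k O) {A : Set P} (hA : A ∈ O) :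
    Aᶜ ∉ O := by
  intro hAc
  rcases hO.2 A (hO.1 hA) with ⟨-, h⟩ | ⟨-, h⟩ <;> contradiction

theorem IsFTangle.empty_not_mem (hO : IsFTangle ord k O) : (∅ : Set P) ∉ O := fun h =>
  hO.2.2 {∅} (singleton_subset_iff.2 h)
    (Or.inl ⟨isStarSet_singleton ∅, by rw [ncard_singleton]; omega, sInter_singleton ∅⟩)

theorem IsFTangle.not_disjoint (hO : IsFTangle ord k O) {B C : Set P} (hB : B ∈ O) (hC : C ∈ O) :
    ¬ Disjoint B C := by
  intro hBC
  have hCB : C ⊆ Bᶜ := subset_compl_iff_disjoint_left.2 hBC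
  by_cases hC_compl : C = Bᶜ
  · exact hO.1.compl_not_mem hB (hC_compl ▸ hC)
  by_cases hC_eq_B : C = B
  · subst hC_eq_B
    have hempty : C = ∅ := disjoint_self.1 hBC
    exact hO.empty_not_mem (hempty ▸ hC)
  refine hO.2.1 ⟨Bᶜ, C, fun hpair => ?_, hCB.ssubset_of_ne hC_compl, by rwa [compl_compl], hC⟩
  have : Bᶜ ∈ ({C, Cᶜ} : Set (Set P)) := hpair ▸ mem_insert _ _
  rcases this with h | h
  · exact hC_compl h.symm
  · exact hC_eq_B (compl_inj_iff.1 h).symm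

theorem IsFTangle.compl_inter_not_mem (hO : IsFTangle ord k O) {A B : Set P} (hA : A ∈ O)
    (hB : B ∈ O) (hcorner : ord (A ∩ Bᶜ) < k) : (A ∩ B)ᶜ ∉ O := by
  intro hAB
  rcases hO.1.2 _ hcorner with ⟨hcornerO, -⟩ | ⟨hcornerO, -⟩
  · exact hO.not_disjoint hB hcornerO
      (disjoint_of_subset_right inter_subset_right disjoint_compl_right)
  · refine hO.2.2 _ (insert_subset hA (insert_subset hcornerO (singleton_subset_iff.2 hAB)))
      (inF_triple ?_ ?_ ?_ ?_)
    all_goals ext x; simp only [mem_union, mem_inter_iff, mem_compl_iff, mem_univ,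
      mem_empty_iff_false]; tauto

end

theorem ord_inter_compl_lt_or_lt {P : Type*} {ord : Set P → ℝ} {k : ℝ}
    (hsym : ∀ A : Set P, ord A = ord Aᶜ)
    (hsub : ∀ A B : Set P, ord (A ∩ B) + ord (A ∪ B) ≤ ord A + ord B)
    {A B : Set P} (hA : ord A < k) (hB : ord B < k) :
    ord (A ∩ Bᶜ) < k ∨ ord (B ∩ Aᶜ) < k := by
  have hcorners : ord (A ∩ Bᶜ) + ord (B ∩ Aᶜ) ≤ ord A + ord B := by
    have h := hsub A Bᶜ
    rwa [← hsym B, hsym (A ∪ Bᶜ), compl_union, compl_compl, inter_comm Aᶜ] at h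
  by_contra! h
  linarith [h.1, h.2]

theorem ftangle_is_kprofile_general {P : Type*}
    (ord : Set P → ℝ) (k : ℝ)
    (hsym : ∀ A : Set P, ord A = ord Aᶜ)
    (hsub : ∀ A B : Set P, ord (A ∩ B) + ord (A ∪ B) ≤ ord A + ord B)
    (O : Set (Set P)) (hO : IsFTangle ord k O) :
    IsKProfile ord k O := by
  refine ⟨hO.1, hO.2.1, fun A hA B hB => ?_⟩
  rcases ord_inter_compl_lt_or_lt hsym hsub (hO.1.1 hA) (hO.1.1 hB) with h | h
  · exact hO.compl_inter_not_mem hA hB h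
  · rw [inter_comm]
    exact hO.compl_inter_not_mem hB hA h

/-- In the universe of bipartitions of a finite pixel set with a submodular order
function, every `F`-tangle of `S_k` is a `k`-profile. -/
theorem ftangle_is_kprofile {P : Type*} [Finite P] [Nonempty P]
    (ord : Set P → ℝ) (k : ℝ)
    (hnonneg : ∀ A : Set P, 0 ≤ ord A)
    (hsym : ∀ A : Set P, ord A = ord Aᶜ)
    (hsub : ∀ A B : Set P, ord (A ∩ B) + ord (A ∪ B) ≤ ord A + ord B)
    (O : Set (Set P)) (hO : IsFTangle ord k O) :
    IsKProfile ord k O :=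
  ftangle_is_kprofile_general ord k hsym hsub O hO
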